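/- arXiv:2307.10548 — 2 statements merged into one kernel-verified Lean document; each statement's English description precedes it below -/
import Mathlib

section
/- For any graph G, the PSD throttling number satisfies thr₊(G) ≤ min over m ≥ Z(G) of ( m + ⌈pt(G,m)/2⌉ ). -/
namespace ZF

variable {V : Type*} [Fintype V] [DecidableEq V]

/-- A valid standard zero forcing force within the vertex set `U`, given blue set `B`:
`u` is blue, `v` is its unique white neighbor in `U`. -/
def ZFValid (G : SimpleGraph V) (U B : Set V) (u v : V) : Prop :=
  u ∈ U ∧ v ∈ U ∧ u ∈ B ∧ v ∉ B ∧ G.Adj u v ∧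
    ∀ w ∈ U, G.Adj u w → w ∉ B → w = v

/-- `whiteConn G U B a b` : `a` and `b` are joined by a walk through white
(non-blue) vertices of `U` (possibly trivial). -/
def whiteConn (G : SimpleGraph V) (U B : Set V) : V → V → Prop :=
  Relation.ReflTransGen (fun a b => G.Adj a b ∧ a ∈ U ∧ b ∈ U ∧ a ∉ B ∧ b ∉ B)

/-- A valid PSD force within the vertex set `U`, given blue set `B`:
`u` is blue and `v` is the unique neighbor of `u` in the component of the
white subgraph containing `v`. -/
def PSDValid (G : SimpleGraph V) (U B : Set V) (u v : V) : Prop :=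
  u ∈ U ∧ v ∈ U ∧ u ∈ B ∧ v ∉ B ∧ G.Adj u v ∧
    ∀ w ∈ U, G.Adj u w → w ∉ B → whiteConn G U B v w → w = v

/-- One propagation step for a generic color change rule `valid`. -/
def step (valid : Set V → V → V → Prop) (B : Set V) : Set V :=
  B ∪ {v | ∃ u, valid B u v}

/-- Iterated propagation. -/
def iter (valid : Set V → V → V → Prop) (B : Set V) : ℕ → Set V :=
  fun k => (step valid)^[k] B

/-- `B ⊆ U` is a forcing set of the induced subgraph on `U` for the rule `valid`. -/
def IsForcingSet (valid : Set V → V → V → Prop) (U B : Set V) : Prop :=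
  B ⊆ U ∧ ∃ k, U ⊆ iter valid B k

/-- Propagation time of the set `B` for rule `valid` on the induced subgraph on `U`. -/
noncomputable def propTime (valid : Set V → V → V → Prop) (U B : Set V) : ℕ :=
  sInf {k | U ⊆ iter valid B k}

/-- Vertices blue after `k` time-steps of the family of forces `F`, starting from `B`. -/
def expand (B : Set V) (F : ℕ → Set (V × V)) : ℕ → Set V
  | 0 => B
  | k + 1 => expand B F k ∪ {v | ∃ u, (u, v) ∈ F (k + 1)}

/-- A relaxed chronology of forces (for the rule `valid`) for the forcing set `B`
on the induced subgraph on `U`, with completion time `K`: at each time-step an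
arbitrary subset of the currently valid forces is performed (no vertex being
forced twice in one step), and all of `U` is blue after step `K`. -/
structure RelaxedChron (valid : Set V → V → V → Prop) (U B : Set V)
    (K : ℕ) (F : ℕ → Set (V × V)) : Prop where
  subset : B ⊆ U
  init : F 0 = ∅
  bound : ∀ k, K < k → F k = ∅
  forcesValid : ∀ k < K, ∀ u v, (u, v) ∈ F (k + 1) → valid (expand B F k) u v
  uniqueForcer : ∀ k u₁ u₂ v, (u₁, v) ∈ F k → (u₂, v) ∈ F k → u₁ = u₂
  complete : U ⊆ expand B F K

/-- The underlying set of forces of a relaxed chronology. -/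
def forcesOf (F : ℕ → Set (V × V)) (K : ℕ) : Set (V × V) :=
  {p | ∃ k, 1 ≤ k ∧ k ≤ K ∧ p ∈ F k}

/-- The terminus of a relaxed chronology: the vertices (of `U`) performing no force. -/
def terminus (U : Set V) (F : ℕ → Set (V × V)) (K : ℕ) : Set V :=
  {v ∈ U | ∀ u, (v, u) ∉ forcesOf F K}

/-- The reversal of a relaxed chronology: each force is reversed and
the order of the time-steps is reversed. -/
def revChron (F : ℕ → Set (V × V)) (K : ℕ) : ℕ → Set (V × V) :=
  fun k => if 1 ≤ k ∧ k ≤ K then {p | (p.2, p.1) ∈ F (K - k + 1)} else ∅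

/-- One round of performing all currently valid forces from the set of forces `S`. -/
def forceStep (valid : Set V → V → V → Prop) (S : Set (V × V)) (B : Set V) : Set V :=
  B ∪ {v | ∃ u, (u, v) ∈ S ∧ valid B u v}

def forceIter (valid : Set V → V → V → Prop) (S : Set (V × V)) (B : Set V) : ℕ → Set V :=
  fun t => (forceStep valid S)^[t] B

/-- Propagation time of a set of forces `S` for starting set `B` on `U`. -/
noncomputable def ptForces (valid : Set V → V → V → Prop) (U : Set V)
    (S : Set (V × V)) (B : Set V) : ℕ :=
  sInf {t | U ⊆ forceIter valid S B t}

/-- `v` is active at time-step `k` of the relaxed chronology `F`: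
it is blue after step `k` and has not yet performed a force. -/
def activeAt (B : Set V) (F : ℕ → Set (V × V)) (v : V) (k : ℕ) : Prop :=
  v ∈ expand B F k ∧ ∀ j ≤ k, ∀ u, (v, u) ∉ F j

/-- The zero forcing number. -/
noncomputable def Z (G : SimpleGraph V) : ℕ :=
  sInf {n | ∃ B : Set V, B.ncard = n ∧ IsForcingSet (ZFValid G Set.univ) Set.univ B}

/-- The PSD forcing number. -/
noncomputable def Zplus (G : SimpleGraph V) : ℕ :=
  sInf {n | ∃ B : Set V, B.ncard = n ∧ IsForcingSet (PSDValid G Set.univ) Set.univ B}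

/-- Standard `m`-propagation time `pt(G,m)`. -/
noncomputable def ptm (G : SimpleGraph V) (m : ℕ) : ℕ :=
  sInf {t | ∃ B : Set V, B.ncard = m ∧ IsForcingSet (ZFValid G Set.univ) Set.univ B ∧
    propTime (ZFValid G Set.univ) Set.univ B = t}

/-- PSD `m`-propagation time `pt₊(G,m)`. -/
noncomputable def ptplusm (G : SimpleGraph V) (m : ℕ) : ℕ :=
  sInf {t | ∃ B : Set V, B.ncard = m ∧ IsForcingSet (PSDValid G Set.univ) Set.univ B ∧
    propTime (PSDValid G Set.univ) Set.univ B = t}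

/-- Standard propagation time `pt(G)`. -/
noncomputable def pt (G : SimpleGraph V) : ℕ := ptm G (Z G)

/-- PSD propagation time `pt₊(G)`. -/
noncomputable def ptplus (G : SimpleGraph V) : ℕ := ptplusm G (Zplus G)

/-- PSD throttling number `thr₊(G)`. -/
noncomputable def thrplus (G : SimpleGraph V) : ℕ :=
  sInf {t | ∃ B : Set V, IsForcingSet (PSDValid G Set.univ) Set.univ B ∧
    t = B.ncard + propTime (PSDValid G Set.univ) Set.univ B}

/-- Closed neighborhood of a set. -/
def closedNbhd (G : SimpleGraph V) (B : Set V) : Set V :=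
  B ∪ {v | ∃ u ∈ B, G.Adj u v}

/-- Power domination process: the first step colors the closed neighborhood,
subsequent steps apply the standard zero forcing rule. -/
def pdIter (G : SimpleGraph V) (B : Set V) : ℕ → Set V
  | 0 => B
  | 1 => closedNbhd G B
  | (k + 2) => step (ZFValid G Set.univ) (pdIter G B (k + 1))

/-- `B` is a power dominating set. -/
def IsPDSet (G : SimpleGraph V) (B : Set V) : Prop :=
  ∃ k, Set.univ ⊆ pdIter G B k

/-- Power propagation time of a set. -/
noncomputable def pdPropTime (G : SimpleGraph V) (B : Set V) : ℕ :=
  sInf {k | Set.univ ⊆ pdIter G B k}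

/-- Power `m`-propagation time `ppt(G,m)`. -/
noncomputable def pptm (G : SimpleGraph V) (m : ℕ) : ℕ :=
  sInf {t | ∃ B : Set V, B.ncard = m ∧ IsPDSet G B ∧ pdPropTime G B = t}

/-- Restriction of a family of forces to those with both endpoints in `W`. -/
def restrictF (F : ℕ → Set (V × V)) (W : Set V) : ℕ → Set (V × V) :=
  fun k => {p ∈ F k | p.1 ∈ W ∧ p.2 ∈ W}

/-- The forcing tree of `b` : all vertices reachable from `b` by a chain of forces in `S`. -/
def treeOf (S : Set (V × V)) (b : V) : Set V :=
  {w | Relation.ReflTransGen (fun a c => (a, c) ∈ S) b w}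

open Classical in
/-- The endpoint, after `k` steps, of the path grown from `b ∈ B` in the
path bundle of the relaxed chronology `F` induced by the vertex `x`: the path is
extended by a force from its current endpoint into the component of white
vertices containing `x`, whenever such a force occurs. -/
noncomputable def lastVert (G : SimpleGraph V) (B : Set V) (F : ℕ → Set (V × V))
    (x : V) (b : V) : ℕ → V
  | 0 => b
  | k + 1 =>
    if h : ∃ w, (lastVert G B F x b k, w) ∈ F (k + 1) ∧ x ∉ expand B F k ∧
        whiteConn G Set.univ (expand B F k) x w
    then h.choose else lastVert G B F x b k

/-- The vertex set of the path bundle of `F` induced by `x`. -/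
def bundle (G : SimpleGraph V) (B : Set V) (F : ℕ → Set (V × V)) (x : V) (K : ℕ) : Set V :=
  {v | ∃ b ∈ B, ∃ j ≤ K, lastVert G B F x b j = v}

/-- The path of the bundle grown from `b`, as a list of vertices. -/
noncomputable def bundlePath (G : SimpleGraph V) (B : Set V) (F : ℕ → Set (V × V))
    (x : V) (K : ℕ) (b : V) : List V :=
  ((List.range (K + 1)).map (lastVert G B F x b)).dedup

/-- A nonempty path in `G`, given as a list of distinct consecutively adjacent vertices. -/
def IsPathList (G : SimpleGraph V) (l : List V) : Prop :=
  l ≠ [] ∧ l.Nodup ∧ l.Chain' G.Adj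

/-- `P` is an `(α,β)`-linkage: a collection of pairwise vertex-disjoint paths,
`α` consisting of one endpoint of each path and `β` of the other endpoints. -/
def IsLinkage (G : SimpleGraph V) (α β : Set V) (P : Set (List V)) : Prop :=
  (∀ l ∈ P, IsPathList G l) ∧
  (∀ l ∈ P, ∀ l' ∈ P, l ≠ l' → ∀ v, v ∈ l → v ∉ l') ∧
  (∀ l ∈ P, ∀ l' ∈ P, l.head? = l'.head? → l = l') ∧
  (∀ l ∈ P, ∀ l' ∈ P, l.getLast? = l'.getLast? → l = l') ∧
  α = {v | ∃ l ∈ P, l.head? = some v} ∧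
  β = {v | ∃ l ∈ P, l.getLast? = some v}

/-- `P` is a rigid linkage: for some `α`, `β` it is the unique `(α,β)`-linkage in `G`. -/
def IsRigidLinkage (G : SimpleGraph V) (P : Set (List V)) : Prop :=
  ∃ α β, IsLinkage G α β P ∧ ∀ P', IsLinkage G α β P' → P' = P

/-- A path cover of `G` : `m` vertex-disjoint induced paths covering all vertices,
the `i`-th path having vertices `vtx i 0, …, vtx i (n i − 1)` in path order. -/
structure IsPathCover (G : SimpleGraph V) (m : ℕ) (n : Fin m → ℕ)
    (vtx : (i : Fin m) → Fin (n i) → V) : Prop where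
  pos : ∀ i, 0 < n i
  inj : Function.Injective (fun p : (i : Fin m) × Fin (n i) => vtx p.1 p.2)
  cover : ∀ v : V, ∃ i j, vtx i j = v
  induced : ∀ i (j j' : Fin (n i)),
    G.Adj (vtx i j) (vtx i j') ↔ ((j : ℕ) + 1 = (j' : ℕ) ∨ (j' : ℕ) + 1 = (j : ℕ))

/-- A witness that a path cover is a parallel increasing path cover: a collection of
block partitions of `{0,…,K}`, one per path, compatible with the edges of `G`. -/
structure IsPIPWitness (G : SimpleGraph V) (m : ℕ) (n : Fin m → ℕ)
    (vtx : (i : Fin m) → Fin (n i) → V) (K : ℕ)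
    (A : (i : Fin m) → Fin (n i) → Finset ℕ) : Prop where
  mem : ∀ i j, A i j ⊆ Finset.range (K + 1)
  nonempty : ∀ i j, (A i j).Nonempty
  partition : ∀ i, ∀ x ∈ Finset.range (K + 1), ∃! j, x ∈ A i j
  mono : ∀ i (j j' : Fin (n i)), (j : ℕ) < (j' : ℕ) → ∀ x ∈ A i j, ∀ y ∈ A i j', x < y
  edge : ∀ (i i' : Fin m) j j', i ≠ i' →
    G.Adj (vtx i j) (vtx i' j') → ((A i j) ∩ (A i' j')).Nonempty

/-- A parallel increasing path cover of `G`. -/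
def IsPIP (G : SimpleGraph V) (m : ℕ) (n : Fin m → ℕ)
    (vtx : (i : Fin m) → Fin (n i) → V) : Prop :=
  IsPathCover G m n vtx ∧ ∃ K A, IsPIPWitness G m n vtx K A

/-- The path cover given by `vtx` is the chain set of the family of forces `F` :
the underlying forces are exactly the consecutive pairs along the paths. -/
def IsChainSetOf (m : ℕ) (n : Fin m → ℕ) (vtx : (i : Fin m) → Fin (n i) → V)
    (F : ℕ → Set (V × V)) (K : ℕ) : Prop :=
  ∀ u w, (u, w) ∈ forcesOf F K ↔
    ∃ (i : Fin m) (j : Fin (n i)) (j' : Fin (n i)),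
      u = vtx i j ∧ w = vtx i j' ∧ (j : ℕ) + 1 = (j' : ℕ)

end ZF

/-!
Take a standard zero forcing set `B` with `|B| = m` and propagation time `p = pt(G,m)`, put
`T = ⌈p/2⌉`, and let `R` be the set of vertices that are blue at time `T` but have not forced
by then. As `T` grows, each vertex entering `R` replaces its forcer, so `|R| ≤ |B|`.

Starting from `R`, the PSD rule runs the standard chronology forwards from time `T` and, at the
same time, its reversal backwards from time `T`: after `s` rounds every vertex that turns blue
by time `T + s` and forces after time `T - s` is blue. Both kinds of forces are valid PSD
forces because no white walk joins a vertex turning blue by time `T` to one turning blue later.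
Hence `R` is a PSD forcing set with `pt₊(G,R) ≤ T`, and `thr₊(G) ≤ |R| + T ≤ m + ⌈p/2⌉`.
-/

namespace ZF

open Set

variable {V : Type*}

section Propagation

variable {valid : Set V → V → V → Prop}

theorem iter_succ (valid : Set V → V → V → Prop) (B : Set V) (k : ℕ) :
    iter valid B (k + 1) = step valid (iter valid B k) :=
  Function.iterate_succ_apply' _ _ _

theorem iter_monotone (valid : Set V → V → V → Prop) (B : Set V) :
    Monotone (iter valid B) :=
  monotone_nat_of_le_succ fun k => (iter_succ valid B k).symm ▸ subset_union_left

theorem propTime_eq_zero_of_subset {U B : Set V} (h : U ⊆ B) : propTime valid U B = 0 :=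
  Nat.sInf_eq_zero.2 (Or.inl h)

def IsMonotoneRule (valid : Set V → V → V → Prop) : Prop :=
  ∀ ⦃B B' : Set V⦄, B ⊆ B' → ∀ ⦃u v : V⦄, valid B u v → v ∉ B' → valid B' u v

theorem IsMonotoneRule.step_subset (hval : IsMonotoneRule valid) {B B' : Set V}
    (h : B ⊆ B') : step valid B ⊆ step valid B' := by
  rintro v (hv | ⟨u, hu⟩)
  · exact Or.inl (h hv)
  · by_cases hv : v ∈ B'
    · exact Or.inl hv
    · exact Or.inr ⟨u, hval h hu hv⟩

theorem IsMonotoneRule.iter_subset (hval : IsMonotoneRule valid) {B B' : Set V}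
    (h : B ⊆ B') (k : ℕ) : iter valid B k ⊆ iter valid B' k := by
  induction k with
  | zero => exact h
  | succ k ih => simpa only [iter_succ] using hval.step_subset ih

end Propagation

section Rules

variable (G : SimpleGraph V)

theorem whiteConn_symm {U B : Set V} {a b : V} (h : whiteConn G U B a b) :
    whiteConn G U B b a :=
  have : Std.Symm fun a b => G.Adj a b ∧ a ∈ U ∧ b ∈ U ∧ a ∉ B ∧ b ∉ B :=
    ⟨fun _ _ ⟨hab, ha, hb, ha', hb'⟩ => ⟨hab.symm, hb, ha, hb', ha'⟩⟩
  Relation.ReflTransGen.stdSymm.symm _ _ h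

theorem whiteConn_anti {U B B' : Set V} (hB : B ⊆ B') {a b : V}
    (h : whiteConn G U B' a b) : whiteConn G U B a b :=
  Relation.ReflTransGen.mono
    (fun _ _ ⟨hab, ha, hb, ha', hb'⟩ => ⟨hab, ha, hb, fun h => ha' (hB h), fun h => hb' (hB h)⟩)
    _ _ h

theorem isMonotoneRule_zfValid (U : Set V) : IsMonotoneRule (ZFValid G U) :=
  fun _ _ hB _ _ ⟨hu, hv, huB, _, hadj, huniq⟩ hv' =>
    ⟨hu, hv, hB huB, hv', hadj, fun w hw hw' hwB => huniq w hw hw' fun h => hwB (hB h)⟩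

theorem isMonotoneRule_psdValid (U : Set V) : IsMonotoneRule (PSDValid G U) :=
  fun _ _ hB _ _ ⟨hu, hv, huB, _, hadj, huniq⟩ hv' =>
    ⟨hu, hv, hB huB, hv', hadj, fun w hw hw' hwB hc =>
      huniq w hw hw' (fun h => hwB (hB h)) (whiteConn_anti G hB hc)⟩

theorem IsForcingSet.mono_zfValid {B B' : Set V} (hB : IsForcingSet (ZFValid G univ) univ B)
    (h : B ⊆ B') : IsForcingSet (ZFValid G univ) univ B' :=
  let ⟨_, k, hk⟩ := hB
  ⟨subset_univ _, k, hk.trans ((isMonotoneRule_zfValid G univ).iter_subset h k)⟩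

end Rules

section BlueTime

variable (G : SimpleGraph V) (B : Set V)

noncomputable def blueTime (v : V) : ℕ :=
  sInf {k | v ∈ iter (ZFValid G univ) B k}

open Classical in
/-- The vertex that forces `v` in the standard process from `B`; junk value `v` when `v ∈ B`. -/
noncomputable def forcer (v : V) : V :=
  if h : ∃ u, ZFValid G univ (iter (ZFValid G univ) B (blueTime G B v - 1)) u v then h.choose
  else v

variable {G B} (hB : IsForcingSet (ZFValid G univ) univ B)
include hB

theorem mem_iter_iff_blueTime_le {v : V} {k : ℕ} :
    v ∈ iter (ZFValid G univ) B k ↔ blueTime G B v ≤ k := by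
  obtain ⟨-, K, hK⟩ := hB
  have hmem : v ∈ iter (ZFValid G univ) B (blueTime G B v) :=
    Nat.sInf_mem (s := {k | v ∈ iter (ZFValid G univ) B k}) ⟨K, hK (mem_univ v)⟩
  exact ⟨fun h => Nat.sInf_le h, fun h => iter_monotone _ _ h hmem⟩

theorem blueTime_eq_zero_iff {v : V} : blueTime G B v = 0 ↔ v ∈ B := by
  rw [← Nat.le_zero, ← mem_iter_iff_blueTime_le hB]
  rfl

theorem blueTime_pos_iff {v : V} : 0 < blueTime G B v ↔ v ∉ B := by
  rw [Nat.pos_iff_ne_zero, Ne, blueTime_eq_zero_iff hB]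

theorem zfValid_forcer {v : V} (hv : v ∉ B) :
    ZFValid G univ (iter (ZFValid G univ) B (blueTime G B v - 1)) (forcer G B v) v := by
  have hpos := (blueTime_pos_iff hB).2 hv
  have hmem : v ∈ step (ZFValid G univ) (iter (ZFValid G univ) B (blueTime G B v - 1)) := by
    rw [← iter_succ, mem_iter_iff_blueTime_le hB]
    omega
  have hnot : v ∉ iter (ZFValid G univ) B (blueTime G B v - 1) := by
    rw [mem_iter_iff_blueTime_le hB]
    omega
  obtain hv' | ⟨u, hu⟩ := hmem
  · exact absurd hv' hnot
  · have hex : ∃ u, ZFValid G univ (iter (ZFValid G univ) B (blueTime G B v - 1)) u v := ⟨u, hu⟩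
    rw [forcer, dif_pos hex]
    exact hex.choose_spec

theorem adj_forcer {v : V} (hv : v ∉ B) : G.Adj (forcer G B v) v :=
  (zfValid_forcer hB hv).2.2.2.2.1

theorem blueTime_forcer_lt {v : V} (hv : v ∉ B) : blueTime G B (forcer G B v) < blueTime G B v := by
  have h := (zfValid_forcer hB hv).2.2.1
  rw [mem_iter_iff_blueTime_le hB] at h
  have := (blueTime_pos_iff hB).2 hv
  omega

theorem blueTime_lt_of_adj_forcer {v x : V} (hv : v ∉ B) (hadj : G.Adj (forcer G B v) x)
    (hne : x ≠ v) : blueTime G B x < blueTime G B v := by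
  have := (blueTime_pos_iff hB).2 hv
  by_contra hle
  refine hne ((zfValid_forcer hB hv).2.2.2.2.2 x (mem_univ x) hadj ?_)
  rw [mem_iter_iff_blueTime_le hB]
  omega

theorem injOn_forcer : InjOn (forcer G B) Bᶜ := by
  intro v₁ h₁ v₂ h₂ he
  by_contra hne
  have k₁ := blueTime_lt_of_adj_forcer hB h₁ (he ▸ adj_forcer hB h₂) (Ne.symm hne)
  have k₂ := blueTime_lt_of_adj_forcer hB h₂ (he ▸ adj_forcer hB h₁) hne
  omega

end BlueTime

section TwoSided

variable (G : SimpleGraph V) (B : Set V)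

def activeSet (T r : ℕ) : Set V :=
  {v | blueTime G B v ≤ T ∧ ∀ y ∉ B, forcer G B y = v → r < blueTime G B y}

/-- The blue set after `s` rounds of the PSD process started from `activeSet G B T T`. -/
def twoSidedSet (T s : ℕ) : Set V :=
  activeSet G B T (T - s) ∪ {v | T < blueTime G B v ∧ blueTime G B v ≤ T + s}

variable {G B}

theorem exists_forced_of_notMem_twoSidedSet {T s : ℕ} {v : V} (hv : v ∉ twoSidedSet G B T s)
    (hvT : blueTime G B v ≤ T) : ∃ y ∉ B, forcer G B y = v ∧ blueTime G B y ≤ T - s := by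
  by_contra! h
  exact hv (Or.inl ⟨hvT, h⟩)

variable (hB : IsForcingSet (ZFValid G univ) univ B)
include hB

/-- No white walk leaves the vertices turning blue by time `T`: a white vertex `b` of that kind
has already forced some `y`, so every neighbour of `b` other than `y` turned blue before `y`. -/
theorem blueTime_le_of_whiteConn {T s : ℕ} {v x : V}
    (h : whiteConn G univ (twoSidedSet G B T s) v x) (hv : blueTime G B v ≤ T) :
    blueTime G B x ≤ T := by
  induction h with
  | refl => exact hv
  | @tail b c _ hbc ih =>
    obtain ⟨hadj, -, -, hb, -⟩ := hbc
    obtain ⟨y, hyB, rfl, hy⟩ := exists_forced_of_notMem_twoSidedSet hb ih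
    rcases eq_or_ne c y with rfl | hne
    · omega
    · have := blueTime_lt_of_adj_forcer hB hyB hadj hne
      omega

theorem exists_psdValid_of_mem_activeSet {T s : ℕ} {v : V}
    (hv : v ∈ activeSet G B T (T - (s + 1))) (hvX : v ∉ twoSidedSet G B T s) :
    ∃ y, PSDValid G univ (twoSidedSet G B T s) y v := by
  obtain ⟨hvT, hchildren⟩ := hv
  obtain ⟨y, hyB, rfl, hyT⟩ := exists_forced_of_notMem_twoSidedSet hvX hvT
  have hy : blueTime G B y = T - s := by
    have := hchildren y hyB rfl
    have := (blueTime_pos_iff hB).2 hyB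
    omega
  refine ⟨y, mem_univ _, mem_univ _, Or.inl ⟨by omega, fun z hzB hz => ?_⟩, hvX,
    (adj_forcer hB hyB).symm, fun w _ hadj hwX hconn => ?_⟩
  · have := blueTime_forcer_lt hB hzB
    rw [hz] at this
    omega
  · by_contra hne
    obtain ⟨z, hzB, rfl, hzT⟩ :=
      exists_forced_of_notMem_twoSidedSet hwX (blueTime_le_of_whiteConn hB hconn hvT)
    have hyz : y ≠ z := fun h => hne (by rw [h])
    have := blueTime_lt_of_adj_forcer hB hzB hadj.symm hyz
    omega

theorem exists_psdValid_of_blueTime_eq {T s : ℕ} {v : V} (hv : blueTime G B v = T + s + 1) :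
    ∃ u, PSDValid G univ (twoSidedSet G B T s) u v := by
  have hvB : v ∉ B := fun h => by
    have := (blueTime_eq_zero_iff hB).2 h
    omega
  have hvX : v ∉ twoSidedSet G B T s := by
    rintro (⟨h, -⟩ | ⟨-, h⟩) <;> omega
  refine ⟨forcer G B v, mem_univ _, mem_univ _, ?_, hvX, adj_forcer hB hvB,
    fun w _ hadj hwX hconn => ?_⟩
  · have := blueTime_forcer_lt hB hvB
    by_cases hu : blueTime G B (forcer G B v) ≤ T
    · refine Or.inl ⟨hu, fun z hzB hz => ?_⟩
      rw [injOn_forcer hB hzB hvB hz]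
      omega
    · exact Or.inr ⟨by omega, by omega⟩
  · by_contra hne
    have := blueTime_lt_of_adj_forcer hB hvB hadj hne
    have hwT : blueTime G B w ≤ T := by
      by_contra
      exact hwX (Or.inr ⟨by omega, by omega⟩)
    have := blueTime_le_of_whiteConn hB (whiteConn_symm G hconn) hwT
    omega

theorem twoSidedSet_succ_subset (T s : ℕ) :
    twoSidedSet G B T (s + 1) ⊆ step (PSDValid G univ) (twoSidedSet G B T s) := by
  intro v hv
  by_cases hvX : v ∈ twoSidedSet G B T s
  · exact Or.inl hvX
  refine Or.inr ?_
  rcases hv with hv | ⟨hT, hs⟩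
  · exact exists_psdValid_of_mem_activeSet hB hv hvX
  · refine exists_psdValid_of_blueTime_eq hB ?_
    by_contra
    exact hvX (Or.inr ⟨hT, by omega⟩)

theorem twoSidedSet_subset_iter (T s : ℕ) :
    twoSidedSet G B T s ⊆ iter (PSDValid G univ) (activeSet G B T T) s := by
  induction s with
  | zero =>
    rintro v (hv | ⟨h₁, h₂⟩)
    · exact hv
    · omega
  | succ s ih =>
    rw [iter_succ]
    exact (twoSidedSet_succ_subset hB T s).trans ((isMonotoneRule_psdValid G univ).step_subset ih)

theorem univ_subset_twoSidedSet {T : ℕ} (hT : propTime (ZFValid G univ) univ B ≤ 2 * T) :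
    univ ⊆ twoSidedSet G B T T := by
  intro v _
  have hv : blueTime G B v ≤ propTime (ZFValid G univ) univ B :=
    (mem_iter_iff_blueTime_le hB).1 (Nat.sInf_mem hB.2 (mem_univ v))
  by_cases h : blueTime G B v ≤ T
  · exact Or.inl ⟨h, fun y hyB _ => by simpa using (blueTime_pos_iff hB).2 hyB⟩
  · exact Or.inr ⟨by omega, by omega⟩

theorem image_forcer_subset_activeSet (t : ℕ) :
    forcer G B '' {y | blueTime G B y = t + 1} ⊆ activeSet G B t t := by
  rintro _ ⟨y, hy : blueTime G B y = t + 1, rfl⟩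
  have hyB : y ∉ B := (blueTime_pos_iff hB).1 (by omega)
  have := blueTime_forcer_lt hB hyB
  refine ⟨by omega, fun z hzB hz => ?_⟩
  rw [injOn_forcer hB hzB hyB hz]
  omega

theorem activeSet_succ_subset (t : ℕ) :
    activeSet G B (t + 1) (t + 1) ⊆
      (activeSet G B t t \ forcer G B '' {y | blueTime G B y = t + 1}) ∪
        {y | blueTime G B y = t + 1} := by
  rintro v ⟨hvt, hv⟩
  rcases eq_or_lt_of_le hvt with h | h
  · exact Or.inr h
  refine Or.inl ⟨⟨by omega, fun y hyB hy => by have := hv y hyB hy; omega⟩, ?_⟩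
  rintro ⟨y, hy : blueTime G B y = t + 1, rfl⟩
  have := hv y ((blueTime_pos_iff hB).1 (by omega)) rfl
  omega

theorem ncard_activeSet_le [Finite V] (t : ℕ) : (activeSet G B t t).ncard ≤ B.ncard := by
  induction t with
  | zero => exact ncard_le_ncard fun v hv => (blueTime_eq_zero_iff hB).1 (Nat.le_zero.1 hv.1)
  | succ t ih =>
    have hinj : InjOn (forcer G B) {y | blueTime G B y = t + 1} :=
      (injOn_forcer hB).mono fun y (hy : blueTime G B y = t + 1) =>
        (blueTime_pos_iff hB).1 (by omega)
    calc (activeSet G B (t + 1) (t + 1)).ncard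
        ≤ (activeSet G B t t \ forcer G B '' {y | blueTime G B y = t + 1}).ncard +
            {y | blueTime G B y = t + 1}.ncard :=
          (ncard_le_ncard (activeSet_succ_subset hB t)).trans (ncard_union_le _ _)
      _ = (activeSet G B t t).ncard := by
          rw [← hinj.ncard_image, ncard_sdiff_add_ncard_of_subset
            (image_forcer_subset_activeSet hB t)]
      _ ≤ B.ncard := ih

theorem exists_psdForcingSet_of_propTime_le [Finite V] {T : ℕ}
    (hT : propTime (ZFValid G univ) univ B ≤ 2 * T) :
    ∃ R : Set V, IsForcingSet (PSDValid G univ) univ R ∧ R.ncard ≤ B.ncard ∧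
      propTime (PSDValid G univ) univ R ≤ T :=
  have h := (univ_subset_twoSidedSet hB hT).trans (twoSidedSet_subset_iter hB T T)
  ⟨activeSet G B T T, ⟨subset_univ _, T, h⟩, ncard_activeSet_le hB T, Nat.sInf_le h⟩

end TwoSided

theorem thrplus_le_ncard_add {G : SimpleGraph V} {B : Set V}
    (hB : IsForcingSet (PSDValid G univ) univ B) :
    thrplus G ≤ B.ncard + propTime (PSDValid G univ) univ B :=
  Nat.sInf_le ⟨B, hB, rfl⟩

theorem exists_ncard_eq_propTime_eq_ptm [Finite V] (G : SimpleGraph V) {m : ℕ} (hZ : Z G ≤ m)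
    (hm : m ≤ Nat.card V) :
    ∃ B : Set V, B.ncard = m ∧ IsForcingSet (ZFValid G univ) univ B ∧
      propTime (ZFValid G univ) univ B = ptm G m := by
  obtain ⟨B₀, hB₀, hB₀Z⟩ :=
    Nat.sInf_mem (s := {n | ∃ B : Set V, B.ncard = n ∧ IsForcingSet (ZFValid G univ) univ B})
      ⟨_, univ, rfl, subset_rfl, 0, subset_rfl⟩
  obtain ⟨B, hsub, -, hB⟩ :=
    exists_subsuperset_card_eq (subset_univ B₀) (hB₀.trans_le hZ) ((ncard_univ V).symm ▸ hm)
  exact Nat.sInf_mem (s := {t | ∃ B : Set V, B.ncard = m ∧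
    IsForcingSet (ZFValid G univ) univ B ∧ propTime (ZFValid G univ) univ B = t})
    ⟨_, B, hB, hB₀Z.mono_zfValid G hsub, rfl⟩

end ZF

theorem thrplus_le_general {V : Type*} [Fintype V] (G : SimpleGraph V)
    (m : ℕ) (hm : ZF.Z G ≤ m) :
    ZF.thrplus G ≤ m + (ZF.ptm G m + 1) / 2 := by
  rcases le_or_gt m (Nat.card V) with hmV | hmV
  · obtain ⟨B, rfl, hB, hpt⟩ := ZF.exists_ncard_eq_propTime_eq_ptm G hm hmV
    obtain ⟨R, hR, hcard, htime⟩ :=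
      ZF.exists_psdForcingSet_of_propTime_le hB (T := (ZF.ptm G B.ncard + 1) / 2) (by omega)
    exact (ZF.thrplus_le_ncard_add hR).trans (by omega)
  · have hR : ZF.IsForcingSet (ZF.PSDValid G Set.univ) Set.univ Set.univ :=
      ⟨subset_rfl, 0, subset_rfl⟩
    have := ZF.thrplus_le_ncard_add hR
    rw [ZF.propTime_eq_zero_of_subset subset_rfl, Set.ncard_univ] at this
    omega

/-- `thr₊(G) ≤ m + ⌈pt(G,m)/2⌉` for every `m ≥ Z(G)`. -/
theorem thrplus_le {V : Type*} [Fintype V] [DecidableEq V] (G : SimpleGraph V)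
    (m : ℕ) (hm : ZF.Z G ≤ m) :
    ZF.thrplus G ≤ m + (ZF.ptm G m + 1) / 2 :=
  thrplus_le_general G m hm
end

section
/- Let G be a graph, B a PSD forcing set, F a relaxed chronology of PSD forces of B on G, and x ∈ V(G). Then the path bundle Q of F induced by x is a path bundle of F that contains all vertices of B and the vertex x. Moreover, if F is a propagating family of PSD forces, then in the restriction F|_Q at least one force occurs in each time-step until all vertices of the induced subgraph on the bundle are blue. -/
/-!
While `x` is white, every blue vertex adjacent to the white component of `x` is the current
end of a path of the bundle: a PSD force from such a vertex into that component is the only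
force it can perform there, so the path ending in it follows that force. Hence the vertices
of the bundle that are white at a time-step lie in the white component of `x`, which makes
every restricted force a standard force inside the bundle. For a propagating family, the
first force entering the white component of `x` is already valid at the current step, so
it is performed by the end of some path, and the bundle grows.
-/

namespace ZF

open Relation

section Expand

variable {V : Type*} {B : Set V} {F : ℕ → Set (V × V)}

lemma expand_monotone : Monotone (expand B F) :=
  monotone_nat_of_le_succ fun _ => Set.subset_union_left

lemma mem_expand_succ_of_mem {k : ℕ} {u v : V} (h : (u, v) ∈ F (k + 1)) :
    v ∈ expand B F (k + 1) :=
  Or.inr ⟨u, h⟩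

lemma exists_first_force_into {S : Set V} (hSB : ∀ w ∈ S, w ∉ B) :
    ∀ {n}, (∃ w ∈ S, w ∈ expand B F n) →
      ∃ k < n, (∀ w ∈ S, w ∉ expand B F k) ∧ ∃ w ∈ S, ∃ u, (u, w) ∈ F (k + 1)
  | 0, ⟨w, hw, hwB⟩ => absurd hwB (hSB w hw)
  | n + 1, ⟨w, hw, hwn⟩ => by
    by_cases hS : ∃ w ∈ S, w ∈ expand B F n
    · obtain ⟨k, hk, hSk, hforce⟩ := exists_first_force_into hSB hS
      exact ⟨k, by omega, hSk, hforce⟩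
    · push Not at hS
      rcases hwn with hwn | ⟨u, hu⟩
      · exact absurd hwn (hS w hw)
      · exact ⟨n, n.lt_succ_self, hS, w, hw, u, hu⟩

lemma RelaxedChron.valid_of_mem {valid : Set V → V → V → Prop} {U : Set V} {K k : ℕ}
    (hF : RelaxedChron valid U B K F) {u v : V} (h : (u, v) ∈ F (k + 1)) :
    valid (expand B F k) u v := by
  refine hF.forcesValid k ?_ u v h
  by_contra hk
  rw [hF.bound (k + 1) (by omega)] at h
  exact h

lemma expand_restrictF_subset {W : Set V} (hBW : B ⊆ W) :
    ∀ k, expand B (restrictF F W) k ⊆ W ∩ expand B F k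
  | 0 => fun _ hv => ⟨hBW hv, hv⟩
  | k + 1 => by
    rintro v (hv | ⟨u, huv, -, hvW⟩)
    · obtain ⟨hvW, hvk⟩ := expand_restrictF_subset hBW k hv
      exact ⟨hvW, Or.inl hvk⟩
    · exact ⟨hvW, mem_expand_succ_of_mem huv⟩

end Expand

section WhiteConn

variable {V : Type*} {G : SimpleGraph V} {U C C' : Set V} {a b : V}

lemma whiteConn.symm (h : whiteConn G U C a b) : whiteConn G U C b a := by
  induction h with
  | refl => exact .refl
  | tail _ h ih => exact .head ⟨h.1.symm, h.2.2.1, h.2.1, h.2.2.2.2, h.2.2.2.1⟩ ih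

lemma whiteConn.notMem (h : whiteConn G U C a b) (ha : a ∉ C) : b ∉ C := by
  induction h with
  | refl => exact ha
  | tail _ h _ => exact h.2.2.2.2

lemma whiteConn.anti (hC : C ⊆ C') (h : whiteConn G U C' a b) : whiteConn G U C a b :=
  ReflTransGen.mono (fun _ _ ⟨hadj, hu, hv, hnu, hnv⟩ =>
    ⟨hadj, hu, hv, fun h => hnu (hC h), fun h => hnv (hC h)⟩) _ _ h

lemma whiteConn.of_forall_notMem (hC' : ∀ c, whiteConn G U C a c → c ∉ C')
    (h : whiteConn G U C a b) : whiteConn G U C' a b := by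
  induction h with
  | refl => exact .refl
  | tail hac hcd ih =>
    exact ih.tail ⟨hcd.1, hcd.2.1, hcd.2.2.1, hC' _ hac, hC' _ (hac.tail hcd)⟩

lemma PSDValid.left_mem {u v : V} (h : PSDValid G U C u v) : u ∈ C := h.2.2.1

lemma PSDValid.right_notMem {u v : V} (h : PSDValid G U C u v) : v ∉ C := h.2.2.2.1

lemma PSDValid.adj {u v : V} (h : PSDValid G U C u v) : G.Adj u v := h.2.2.2.2.1

lemma PSDValid.eq_of_whiteConn {u v w : V} (huv : PSDValid G Set.univ C u v)
    (huw : G.Adj u w) (hv : whiteConn G Set.univ C a v) (hw : whiteConn G Set.univ C a w) :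
    w = v :=
  have hvw : whiteConn G Set.univ C v w := hv.symm.trans hw
  huv.2.2.2.2.2 w trivial huw (hvw.notMem huv.right_notMem) hvw

end WhiteConn

section Bundle

variable {V : Type*} {G : SimpleGraph V} {B : Set V} {F : ℕ → Set (V × V)} {x b : V} {k K : ℕ}

/-- Witness: the first force into the white component of `x` at step `k`; that component is
still entirely white when the force is performed, so the force is already valid at step `k`. -/
lemma exists_psdValid_into_whiteConn (hF : RelaxedChron (PSDValid G Set.univ) Set.univ B K F)
    (hx : x ∉ expand B F k) :
    ∃ u w, whiteConn G Set.univ (expand B F k) x w ∧ PSDValid G Set.univ (expand B F k) u w := by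
  set S := {w | whiteConn G Set.univ (expand B F k) x w}
  have hSB : ∀ w ∈ S, w ∉ B := fun w hw hwB => hw.notMem hx (expand_monotone k.zero_le hwB)
  obtain ⟨t, -, hSt, w, hxw, u, huw⟩ :=
    exists_first_force_into hSB ⟨x, .refl, hF.complete trivial⟩
  have hval := hF.valid_of_mem huw
  have hwk : w ∉ expand B F k := hxw.notMem hx
  have huk : u ∈ expand B F k := by
    by_contra hu
    exact hSt u (hxw.tail ⟨hval.adj.symm, trivial, trivial, hwk, hu⟩) hval.left_mem
  refine ⟨u, w, hxw, trivial, trivial, huk, hwk, hval.adj, fun w' _ huw' _ hww' => ?_⟩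
  have hxt {c : V} (h : whiteConn G Set.univ (expand B F k) x c) :
      whiteConn G Set.univ (expand B F t) x c :=
    h.of_forall_notMem hSt
  exact hval.eq_of_whiteConn huw' (hxt hxw) (hxt (hxw.trans hww'))

variable [Fintype V]

/-- The condition under which `lastVert` extends a path by the force `(u, w)`. -/
def ForcesIntoWhiteComp (G : SimpleGraph V) (B : Set V) (F : ℕ → Set (V × V)) (x : V)
    (k : ℕ) (u w : V) : Prop :=
  (u, w) ∈ F (k + 1) ∧ x ∉ expand B F k ∧ whiteConn G Set.univ (expand B F k) x w

lemma lastVert_succ_of_exists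
    (h : ∃ w, ForcesIntoWhiteComp G B F x k (lastVert G B F x b k) w) :
    ForcesIntoWhiteComp G B F x k (lastVert G B F x b k) (lastVert G B F x b (k + 1)) := by
  rw [lastVert]
  split_ifs with h'
  · exact h'.choose_spec
  · exact absurd h h'

lemma lastVert_succ_of_not_exists
    (h : ¬ ∃ w, ForcesIntoWhiteComp G B F x k (lastVert G B F x b k) w) :
    lastVert G B F x b (k + 1) = lastVert G B F x b k := by
  rw [lastVert]
  split_ifs with h'
  · exact absurd h' h
  · rfl

lemma lastVert_succ_eq_or (G : SimpleGraph V) (B : Set V) (F : ℕ → Set (V × V)) (x b : V)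
    (k : ℕ) :
    lastVert G B F x b (k + 1) = lastVert G B F x b k ∨
      ForcesIntoWhiteComp G B F x k (lastVert G B F x b k) (lastVert G B F x b (k + 1)) := by
  by_cases h : ∃ w, ForcesIntoWhiteComp G B F x k (lastVert G B F x b k) w
  · exact Or.inr (lastVert_succ_of_exists h)
  · exact Or.inl (lastVert_succ_of_not_exists h)

lemma lastVert_mem_treeOf : ∀ {j}, j ≤ K → lastVert G B F x b j ∈ treeOf (forcesOf F K) b
  | 0, _ => .refl
  | j + 1, hj => by
    rcases lastVert_succ_eq_or G B F x b j with heq | hforce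
    · rw [heq]
      exact lastVert_mem_treeOf (by omega)
    · exact (lastVert_mem_treeOf (by omega)).tail ⟨j + 1, by omega, hj, hforce.1⟩

lemma lastVert_mem_bundle (hb : b ∈ B) {j : ℕ} (hj : j ≤ K) :
    lastVert G B F x b j ∈ bundle G B F x K :=
  ⟨b, hb, j, hj, rfl⟩

lemma subset_bundle : B ⊆ bundle G B F x K :=
  fun _ hb => lastVert_mem_bundle hb K.zero_le

lemma whiteConn_of_mem_bundle {v : V} (hv : v ∈ bundle G B F x K) (hvk : v ∉ expand B F k) :
    x ∉ expand B F k ∧ whiteConn G Set.univ (expand B F k) x v := by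
  obtain ⟨b, hb, j, -, rfl⟩ := hv
  induction j with
  | zero => exact absurd (expand_monotone k.zero_le hb) hvk
  | succ j ih =>
    rcases lastVert_succ_eq_or G B F x b j with heq | ⟨hforce, hxj, hxv⟩
    · rw [heq] at hvk ⊢
      exact ih hvk
    · have hkj : k ≤ j := by
        by_contra! hjk
        exact hvk (expand_monotone hjk (mem_expand_succ_of_mem hforce))
      exact ⟨fun hx => hxj (expand_monotone hkj hx), hxv.anti (expand_monotone hkj)⟩

lemma lastVert_succ_eq_of_forcesIntoWhiteComp
    (hF : RelaxedChron (PSDValid G Set.univ) Set.univ B K F) {w : V}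
    (h : ForcesIntoWhiteComp G B F x k (lastVert G B F x b k) w) :
    lastVert G B F x b (k + 1) = w := by
  have hnext := lastVert_succ_of_exists ⟨w, h⟩
  exact (hF.valid_of_mem h.1).eq_of_whiteConn (hF.valid_of_mem hnext.1).adj h.2.2
    hnext.2.2

lemma exists_lastVert_eq_of_adj_whiteConn
    (hF : RelaxedChron (PSDValid G Set.univ) Set.univ B K F) :
    ∀ {k u w}, u ∈ expand B F k → x ∉ expand B F k → G.Adj u w →
      whiteConn G Set.univ (expand B F k) x w → ∃ b ∈ B, lastVert G B F x b k = u
  | 0, u, _, hu, _, _, _ => ⟨u, hu, rfl⟩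
  | k + 1, u, w, hu, hx, huw, hxw => by
    have hsub : expand B F k ⊆ expand B F (k + 1) := expand_monotone k.le_succ
    have hxk : x ∉ expand B F k := fun h => hx (hsub h)
    have hxw' : whiteConn G Set.univ (expand B F k) x w := hxw.anti hsub
    rcases hu with hu | ⟨u₁, hu₁⟩
    · obtain ⟨b, hb, rfl⟩ := exists_lastVert_eq_of_adj_whiteConn hF hu hxk huw hxw'
      refine ⟨b, hb, lastVert_succ_of_not_exists ?_⟩
      -- inside that component `u` could only force `w`, which is still white
      rintro ⟨w', hw', -, hxw''⟩
      have hww' : w = w' := (hF.valid_of_mem hw').eq_of_whiteConn huw hxw'' hxw'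
      exact hxw.notMem hx (hww' ▸ mem_expand_succ_of_mem hw')
    · have hval := hF.valid_of_mem hu₁
      have hxu : whiteConn G Set.univ (expand B F k) x u :=
        hxw'.tail ⟨huw.symm, trivial, trivial, hxw'.notMem hxk, hval.right_notMem⟩
      obtain ⟨b, hb, hbu₁⟩ :=
        exists_lastVert_eq_of_adj_whiteConn hF hval.left_mem hxk hval.adj hxu
      exact ⟨b, hb, lastVert_succ_eq_of_forcesIntoWhiteComp hF ⟨hbu₁ ▸ hu₁, hxk, hxu⟩⟩

lemma mem_bundle_self (hF : RelaxedChron (PSDValid G Set.univ) Set.univ B K F) :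
    x ∈ bundle G B F x K := by
  by_cases hxB : x ∈ B
  · exact subset_bundle hxB
  obtain ⟨k, hkK, hxk, w, rfl, u, hu⟩ := exists_first_force_into (S := {x}) (by simpa)
    ⟨x, rfl, hF.complete trivial⟩
  have hval := hF.valid_of_mem hu
  obtain ⟨b, hb, hbu⟩ :=
    exists_lastVert_eq_of_adj_whiteConn hF hval.left_mem (hxk w rfl) hval.adj .refl
  exact ⟨b, hb, k + 1, hkK,
    lastVert_succ_eq_of_forcesIntoWhiteComp hF ⟨hbu ▸ hu, hxk w rfl, .refl⟩⟩

lemma lastVert_mem_expand_restrictF (hF : RelaxedChron (PSDValid G Set.univ) Set.univ B K F)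
    (hb : b ∈ B) : ∀ {j}, j ≤ K → lastVert G B F x b j ∈ expand B F k →
      lastVert G B F x b j ∈ expand B (restrictF F (bundle G B F x K)) k
  | 0, _, _ => expand_monotone k.zero_le hb
  | j + 1, hjK, h => by
    rcases lastVert_succ_eq_or G B F x b j with heq | hforce
    · rw [heq] at h ⊢
      exact lastVert_mem_expand_restrictF hF hb (by omega) h
    · have hjk : j < k := by
        by_contra! hkj
        exact (hF.valid_of_mem hforce.1).right_notMem (expand_monotone hkj h)
      exact expand_monotone hjk (mem_expand_succ_of_mem
        ⟨hforce.1, lastVert_mem_bundle hb (by omega), lastVert_mem_bundle hb hjK⟩)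

lemma expand_restrictF_bundle (hF : RelaxedChron (PSDValid G Set.univ) Set.univ B K F)
    (k : ℕ) : expand B (restrictF F (bundle G B F x K)) k = bundle G B F x K ∩ expand B F k := by
  refine (expand_restrictF_subset subset_bundle k).antisymm ?_
  rintro _ ⟨⟨b, hb, j, hj, rfl⟩, hvk⟩
  exact lastVert_mem_expand_restrictF hF hb hj hvk

lemma relaxedChron_restrictF_bundle (hF : RelaxedChron (PSDValid G Set.univ) Set.univ B K F) :
    RelaxedChron (ZFValid G (bundle G B F x K)) (bundle G B F x K) B K
      (restrictF F (bundle G B F x K)) where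
  subset := subset_bundle
  init := by simp [restrictF, hF.init]
  bound k hk := by simp [restrictF, hF.bound k hk]
  forcesValid k _ u v := by
    rintro ⟨huv, hu, hv⟩
    have hval := hF.valid_of_mem huv
    rw [expand_restrictF_bundle hF]
    refine ⟨hu, hv, ⟨hu, hval.left_mem⟩, fun h => hval.right_notMem h.2, hval.adj,
      fun w hw huw hwk => ?_⟩
    have hwk' : w ∉ expand B F k := fun h => hwk ⟨hw, h⟩
    exact hval.eq_of_whiteConn huw (whiteConn_of_mem_bundle hv hval.right_notMem).2
      (whiteConn_of_mem_bundle hw hwk').2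
  uniqueForcer k u₁ u₂ v h₁ h₂ := hF.uniqueForcer k u₁ u₂ v h₁.1 h₂.1
  complete v hv := by
    rw [expand_restrictF_bundle hF]
    exact ⟨hv, hF.complete trivial⟩

lemma exists_mem_restrictF_bundle_succ
    (hF : RelaxedChron (PSDValid G Set.univ) Set.univ B K F)
    (hprop : ∀ u v, PSDValid G Set.univ (expand B F k) u v → ∃ u', (u', v) ∈ F (k + 1))
    (hk : k < K) (hQ : ¬ bundle G B F x K ⊆ expand B (restrictF F (bundle G B F x K)) k) :
    ∃ p, p ∈ restrictF F (bundle G B F x K) (k + 1) := by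
  obtain ⟨v, hv, hvk⟩ := Set.not_subset.mp hQ
  rw [expand_restrictF_bundle hF] at hvk
  have hx := (whiteConn_of_mem_bundle hv fun h => hvk ⟨hv, h⟩).1
  obtain ⟨u, w, hxw, huw⟩ := exists_psdValid_into_whiteConn hF hx
  obtain ⟨u', hu'w⟩ := hprop u w huw
  have hval := hF.valid_of_mem hu'w
  obtain ⟨b, hb, rfl⟩ :=
    exists_lastVert_eq_of_adj_whiteConn hF hval.left_mem hx hval.adj hxw
  have hnext := lastVert_succ_eq_of_forcesIntoWhiteComp hF ⟨hu'w, hx, hxw⟩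
  exact ⟨_, hu'w, lastVert_mem_bundle hb hk.le, hnext ▸ lastVert_mem_bundle hb hk⟩

end Bundle

end ZF

theorem bundle_isPathBundle_general {V : Type*} [Fintype V]
    (G : SimpleGraph V) (B : Set V) (K : ℕ) (F : ℕ → Set (V × V))
    (hF : ZF.RelaxedChron (ZF.PSDValid G Set.univ) Set.univ B K F) (x : V) :
    B ⊆ ZF.bundle G B F x K ∧
    x ∈ ZF.bundle G B F x K ∧
    (∀ b ∈ B, ∀ j ≤ K, ZF.lastVert G B F x b j ∈ ZF.treeOf (ZF.forcesOf F K) b) ∧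
    ZF.RelaxedChron (ZF.ZFValid G (ZF.bundle G B F x K)) (ZF.bundle G B F x K) B K
      (ZF.restrictF F (ZF.bundle G B F x K)) ∧
    ((∀ k < K, ∀ u v, ZF.PSDValid G Set.univ (ZF.expand B F k) u v →
        ∃ u', (u', v) ∈ F (k + 1)) →
      ∀ k < K, ¬ ZF.bundle G B F x K ⊆
          ZF.expand B (ZF.restrictF F (ZF.bundle G B F x K)) k →
        ∃ p, p ∈ ZF.restrictF F (ZF.bundle G B F x K) (k + 1)) :=
  ⟨ZF.subset_bundle, ZF.mem_bundle_self hF, fun _ _ _ hj => ZF.lastVert_mem_treeOf hj,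
    ZF.relaxedChron_restrictF_bundle hF,
    fun hprop k hk => ZF.exists_mem_restrictF_bundle_succ hF (hprop k hk) hk⟩

/-- The path bundle of a relaxed chronology of PSD forces induced by a vertex `x` is a
path bundle (each path lies inside the corresponding forcing tree and the restriction of
`F` to the bundle is a relaxed chronology of standard forces for `B`) containing `B` and
`x`; moreover, if `F` is a propagating family, at least one force of the restriction
occurs in each time-step until the bundle is entirely blue. -/
theorem bundle_isPathBundle {V : Type*} [Fintype V] [DecidableEq V]
    (G : SimpleGraph V) (B : Set V) (K : ℕ) (F : ℕ → Set (V × V))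
    (hB : ZF.IsForcingSet (ZF.PSDValid G Set.univ) Set.univ B)
    (hF : ZF.RelaxedChron (ZF.PSDValid G Set.univ) Set.univ B K F) (x : V) :
    B ⊆ ZF.bundle G B F x K ∧
    x ∈ ZF.bundle G B F x K ∧
    (∀ b ∈ B, ∀ j ≤ K, ZF.lastVert G B F x b j ∈ ZF.treeOf (ZF.forcesOf F K) b) ∧
    ZF.RelaxedChron (ZF.ZFValid G (ZF.bundle G B F x K)) (ZF.bundle G B F x K) B K
      (ZF.restrictF F (ZF.bundle G B F x K)) ∧
    ((∀ k < K, ∀ u v, ZF.PSDValid G Set.univ (ZF.expand B F k) u v →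
        ∃ u', (u', v) ∈ F (k + 1)) →
      ∀ k < K, ¬ ZF.bundle G B F x K ⊆
          ZF.expand B (ZF.restrictF F (ZF.bundle G B F x K)) k →
        ∃ p, p ∈ ZF.restrictF F (ZF.bundle G B F x K) (k + 1)) :=
  bundle_isPathBundle_general G B K F hF x
end
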